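/- Let C'/C be a field extension and V a representation of a group G over C whose scalar extension V ⊗_C C' is a semisimple C'-representation of G. Then V is semisimple as a C-representation of G. -/

import Mathlib

open scoped TensorProduct

/-!
Choose a `C`-linear retraction `φ : C' → C` of the inclusion (so `φ 1 = 1`). If `W ⊆ V` is a
subrepresentation, `C' ⊗ W` is a subrepresentation of `C' ⊗ V`, so it has an equivariant
projection `P`. Then `v ↦ (φ ⊗ id) (P (1 ⊗ v))` is a `G`-equivariant `C`-linear projection of
`V` onto `W`, and its kernel is a `G`-stable complement of `W`.
-/

def IsSubrep {C G V : Type*} [CommSemiring C] [Monoid G] [AddCommMonoid V] [Module C V]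
    (ρ : Representation C G V) (W : Submodule C V) : Prop :=
  ∀ g : G, ∀ v ∈ W, ρ g v ∈ W

def IsSemisimpleRep {C G V : Type*} [CommSemiring C] [Monoid G] [AddCommMonoid V] [Module C V]
    (ρ : Representation C G V) : Prop :=
  ∀ W : Submodule C V, IsSubrep ρ W → ∃ W' : Submodule C V, IsSubrep ρ W' ∧ IsCompl W W'

section Complements

variable {k G V : Type*} [CommRing k] [Monoid G] [AddCommGroup V] [Module k V]
  {ρ : Representation k G V}

theorem isSubrep_iff_forall_mem_invtSubmodule {W : Submodule k V} :
    IsSubrep ρ W ↔ ∀ g, W ∈ Module.End.invtSubmodule (ρ g) :=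
  Iff.rfl

theorem IsSubrep.commute_projection {W U : Submodule k V} (hW : IsSubrep ρ W)
    (hU : IsSubrep ρ U) (hWU : IsCompl W U) (g : G) : Commute (W.projection U hWU) (ρ g) := by
  refine (LinearMap.IsIdempotentElem.commute_iff
    (Submodule.isIdempotentElem_projection hWU)).mpr ⟨?_, ?_⟩
  · rw [Submodule.range_projection]
    exact isSubrep_iff_forall_mem_invtSubmodule.mp hW g
  · rw [Submodule.ker_projection]
    exact isSubrep_iff_forall_mem_invtSubmodule.mp hU g

theorem exists_isSubrep_isCompl_of_isProj {W : Submodule k V} {q : V →ₗ[k] V}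
    (hq : LinearMap.IsProj W q) (hcomm : ∀ g, Commute q (ρ g)) :
    ∃ W' : Submodule k V, IsSubrep ρ W' ∧ IsCompl W W' :=
  ⟨LinearMap.ker q, isSubrep_iff_forall_mem_invtSubmodule.mpr fun g =>
    ((LinearMap.IsIdempotentElem.commute_iff hq.isIdempotentElem).mp (hcomm g)).2, hq.isCompl⟩

end Complements

section BaseChange

variable {k K G V : Type*} [CommRing k] [CommRing K] [Algebra k K] [Monoid G]
  [AddCommGroup V] [Module k V] {ρ : Representation k G V}
  {ρ' : Representation K G (K ⊗[k] V)}

theorem IsSubrep.baseChange (hρ' : ∀ (g : G) (c : K) (v : V), ρ' g (c ⊗ₜ[k] v) = c ⊗ₜ[k] ρ g v)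
    {W : Submodule k V} (hW : IsSubrep ρ W) : IsSubrep ρ' (W.baseChange K) := by
  rintro g _ ⟨y, rfl⟩
  induction y using TensorProduct.induction_on with
  | zero => simp
  | tmul c w =>
    rw [LinearMap.baseChange_tmul, Submodule.subtype_apply, hρ']
    exact Submodule.tmul_mem_baseChange_of_mem c (hW g w w.2)
  | add y z hy hz =>
    rw [map_add, map_add]
    exact add_mem hy hz

theorem lid_rTensor_mem_of_mem_baseChange (φ : K →ₗ[k] k) {W : Submodule k V}
    {x : K ⊗[k] V} (hx : x ∈ W.baseChange K) : TensorProduct.lid k V (φ.rTensor V x) ∈ W := by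
  obtain ⟨y, rfl⟩ := hx
  induction y using TensorProduct.induction_on with
  | zero => simp
  | tmul c w => simpa using W.smul_mem (φ c) w.2
  | add y z hy hz =>
    rw [map_add, map_add, map_add]
    exact add_mem hy hz

theorem lid_rTensor_apply_rep
    (hρ' : ∀ (g : G) (c : K) (v : V), ρ' g (c ⊗ₜ[k] v) = c ⊗ₜ[k] ρ g v)
    (φ : K →ₗ[k] k) (g : G) (x : K ⊗[k] V) :
    TensorProduct.lid k V (φ.rTensor V (ρ' g x)) = ρ g (TensorProduct.lid k V (φ.rTensor V x)) := by
  induction x using TensorProduct.induction_on with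
  | zero => simp
  | tmul c v => simp [hρ']
  | add y z hy hz => simp only [map_add, hy, hz]

theorem exists_isProj_commute_of_baseChange
    (hρ' : ∀ (g : G) (c : K) (v : V), ρ' g (c ⊗ₜ[k] v) = c ⊗ₜ[k] ρ g v)
    (φ : K →ₗ[k] k) (hφ : φ 1 = 1) {W : Submodule k V} {P : K ⊗[k] V →ₗ[K] K ⊗[k] V}
    (hP : LinearMap.IsProj (W.baseChange K) P) (hPcomm : ∀ g, Commute P (ρ' g)) :
    ∃ q : V →ₗ[k] V, LinearMap.IsProj W q ∧ ∀ g, Commute q (ρ g) := by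
  let ψ : K ⊗[k] V →ₗ[k] V := (TensorProduct.lid k V).toLinearMap ∘ₗ φ.rTensor V
  refine ⟨ψ ∘ₗ P.restrictScalars k ∘ₗ TensorProduct.mk k K V 1, ⟨?_, ?_⟩, ?_⟩
  · exact fun v => lid_rTensor_mem_of_mem_baseChange φ (hP.map_mem _)
  · intro w hw
    simp [ψ, hP.map_id _ (Submodule.tmul_mem_baseChange_of_mem 1 hw), hφ]
  · intro g
    ext v
    have hPg : P (ρ' g ((1 : K) ⊗ₜ[k] v)) = ρ' g (P ((1 : K) ⊗ₜ[k] v)) :=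
      LinearMap.congr_fun (hPcomm g) _
    simp only [Module.End.mul_apply, LinearMap.comp_apply, TensorProduct.mk_apply,
      LinearMap.restrictScalars_apply, ← hρ', hPg, ψ, LinearEquiv.coe_coe,
      lid_rTensor_apply_rep hρ']

end BaseChange

/-- Descent of semisimplicity along a field extension `C'/C`: if the scalar
extension `V ⊗_C C'` (with `G` acting through the second factor, i.e.
`ρ' g (c ⊗ v) = c ⊗ ρ g v`) is a semisimple representation of `G` over `C'`,
then `V` is a semisimple representation of `G` over `C`. -/
theorem semisimple_of_scalar_extension_semisimple
    {C C' G V : Type*} [Field C] [Field C'] [Algebra C C'] [Group G]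
    [AddCommGroup V] [Module C V]
    (ρ : Representation C G V)
    (ρ' : Representation C' G (C' ⊗[C] V))
    (hρ' : ∀ (g : G) (c : C') (v : V), ρ' g (c ⊗ₜ[C] v) = c ⊗ₜ[C] (ρ g v))
    (hss : IsSemisimpleRep ρ') :
    IsSemisimpleRep ρ := by
  intro W hW
  obtain ⟨φ, hφ⟩ := (Algebra.linearMap C C').exists_leftInverse_of_injective
    (LinearMap.ker_eq_bot.mpr (algebraMap C C').injective)
  have hW' := hW.baseChange hρ'
  obtain ⟨U, hU, hWU⟩ := hss _ hW'
  obtain ⟨q, hq, hqcomm⟩ := exists_isProj_commute_of_baseChange hρ' φ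
    (by simpa using LinearMap.congr_fun hφ 1)
    ⟨Submodule.projection_apply_mem hWU, fun _ => Submodule.projection_apply_of_mem_left hWU⟩
    (hW'.commute_projection hU hWU)
  exact exists_isSubrep_isCompl_of_isProj hq hqcomm
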